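/- arXiv:1001.1556 — 2 statements merged into one kernel-verified Lean document; each statement's English description precedes it below -/
import Mathlib

section
/- (Beck's characterization of descent) Let T = (T, μ, η) be a monad on a category C admitting equalizers. The canonical functor can : C ⥤ D(T) into the descent category (coalgebras over the comonad K^T on C^T) is fully faithful if and only if for every object C of C, the fork C → T C ⇉ T²C given by η_C and the pair (T η_C, η_{T C}) is an equalizer diagram. -/
/-!
Beck's descent theorem holds for any adjunction `F ⊣ G`, not only for the free-forgetful one of
a monad: the comparison functor into the coalgebras of the comonad `G ⋙ F` has a right adjoint
sending a coalgebra `(A, a)` to the equalizer of `G a` and `η_{G A}`, and the unit of this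
adjunction at `X` is the canonical map from `X` into the equalizer of `G F η_X` and `η_{G F X}`.
So the comparison functor is fully faithful iff this unit is invertible, i.e. iff every such
unit fork is an equalizer. For `F ⊣ G = T.free ⊣ T.forget` this fork is `X → T X ⇉ T² X`.
-/

open CategoryTheory CategoryTheory.Limits

namespace CategoryTheory

theorem Adjunction.full_and_faithful_iff_forall_isIso_unit_app {C D : Type*} [Category C]
    [Category D] {L : C ⥤ D} {R : D ⥤ C} (h : L ⊣ R) :
    (L.Full ∧ L.Faithful) ↔ ∀ X, IsIso (h.unit.app X) := by
  constructor
  · rintro ⟨_, _⟩ X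
    infer_instance
  · intro hunit
    have : IsIso h.unit := NatIso.isIso_of_isIso_app _
    exact ⟨h.fullyFaithfulLOfIsIsoUnit.full, h.fullyFaithfulLOfIsIsoUnit.faithful⟩

theorem Limits.Fork.nonempty_isLimit_ofι_congr {C : Type*} [Category C] {A B P : C}
    {f g f' g' : A ⟶ B} {ι ι' : P ⟶ A} (hf : f = f') (hg : g = g') (hι : ι = ι')
    {w : ι ≫ f = ι ≫ g} {w' : ι' ≫ f' = ι' ≫ g'} :
    Nonempty (IsLimit (Fork.ofι ι w)) ↔ Nonempty (IsLimit (Fork.ofι ι' w')) := by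
  subst hf hg hι
  rfl

namespace Comonad

variable {C D : Type*} [Category C] [Category D] {F : C ⥤ D} {G : D ⥤ C} (adj : F ⊣ G)
  [∀ A : adj.toComonad.Coalgebra, HasEqualizer (G.map A.a) (adj.unit.app (G.obj A.A))]

theorem isIso_comparisonAdjunction_unit_app_iff (X : C) :
    IsIso ((ComonadicityInternal.comparisonAdjunction adj).unit.app X) ↔
      Nonempty (IsLimit (ComonadicityInternal.unitFork adj X)) := by
  rw [ComonadicityInternal.comparisonAdjunction_unit_app]
  exact ((limit.isLimit _).nonempty_isLimit_iff_isIso_lift).symm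

theorem comparison_full_and_faithful_iff :
    ((comparison adj).Full ∧ (comparison adj).Faithful) ↔
      ∀ X, Nonempty (IsLimit (ComonadicityInternal.unitFork adj X)) := by
  rw [(ComonadicityInternal.comparisonAdjunction adj).full_and_faithful_iff_forall_isIso_unit_app]
  exact forall_congr' (isIso_comparisonAdjunction_unit_app_iff adj)

end Comonad

theorem Monad.adj_unit_app {C : Type*} [Category C] (T : Monad C) (X : C) :
    T.adj.unit.app X = T.η.app X :=
  Category.comp_id _

end CategoryTheory

theorem stmt_6 {C : Type*} [Category C] [HasEqualizers C] (T : Monad C) :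
    ((Comonad.comparison T.adj).Full ∧ (Comonad.comparison T.adj).Faithful) ↔
      ∀ X : C,
        Nonempty (IsLimit (Fork.ofι (f := T.map (T.η.app X)) (g := T.η.app (T.obj X))
          (T.η.app X) (by simpa using (T.η.naturality (T.η.app X)).symm))) := by
  rw [Comonad.comparison_full_and_faithful_iff]
  exact forall_congr' fun X => Fork.nonempty_isLimit_ofι_congr
    (congrArg T.map (T.adj_unit_app X)) (T.adj_unit_app (T.obj X)) (T.adj_unit_app X)
end

section
/- (Beck's characterization of codescent) Let K = (K, Δ, ε) be a comonad on a category D admitting coequalizers. The canonical functor can : D ⥤ D^{co}(K) into the codescent category (algebras over the monad T_K on D_K) is fully faithful if and only if for every object D of D, the cofork K²D ⇉ K D → D given by the pair (K ε_D, ε_{K D}) and ε_D is a coequalizer diagram. -/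
/-!
The comparison functor `can` is a right adjoint as soon as `D` has coequalizers: its left adjoint
sends a `T_K`-algebra to the coequalizer of its main pair, and the counit at `X` is the canonical
map from the coequalizer of `(K ε_X, ε_{K X})` to `X` induced by the cofork `ε_X`. A right adjoint
is fully faithful exactly when its counit is invertible, and that canonical map is invertible
exactly when the cofork is a coequalizer.
-/

open CategoryTheory CategoryTheory.Limits

universe v u₁ u₂

theorem CategoryTheory.Limits.Cofork.nonempty_isColimit_ofπ_congr {C : Type*} [Category C]
    {X Y P : C} {f g f' g' : X ⟶ Y} {π π' : Y ⟶ P} (hf : f = f') (hg : g = g') (hπ : π = π')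
    (w : f ≫ π = g ≫ π) (w' : f' ≫ π' = g' ≫ π') :
    Nonempty (IsColimit (Cofork.ofπ π w)) ↔ Nonempty (IsColimit (Cofork.ofπ π' w')) := by
  subst hf hg hπ
  rfl

namespace CategoryTheory.Monad

open MonadicityInternal

variable {C : Type u₁} {D : Type u₂} [Category.{v} C] [Category.{v} D] {F : C ⥤ D} {G : D ⥤ C}
  (adj : F ⊣ G) [∀ A : adj.toMonad.Algebra, HasCoequalizer (F.map A.a) (adj.counit.app (F.obj A.A))]

theorem isIso_comparisonAdjunction_counit_app_iff (B : D) :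
    IsIso ((comparisonAdjunction adj).counit.app B) ↔
      Nonempty (IsColimit (counitCofork adj B)) := by
  rw [comparisonAdjunction_counit_app, ← colimit.isColimit_desc]
  exact (colimit.isColimit _).nonempty_isColimit_iff_isIso_desc.symm

theorem comparison_full_faithful_iff :
    ((comparison adj).Full ∧ (comparison adj).Faithful) ↔
      ∀ B, Nonempty (IsColimit (counitCofork adj B)) := by
  simp_rw [← isIso_comparisonAdjunction_counit_app_iff, ← NatTrans.isIso_iff_isIso_app]
  constructor
  · rintro ⟨_, _⟩
    infer_instance
  · intro _
    exact ⟨(comparisonAdjunction adj).fullyFaithfulROfIsIsoCounit.full,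
      (comparisonAdjunction adj).fullyFaithfulROfIsIsoCounit.faithful⟩

end CategoryTheory.Monad

-- Not `rfl`: `Comonad.adj` is built from a hom-equivalence, so the counitCofork of `K.adj` differs
-- from the cofork in the statement only up to these equations.
theorem CategoryTheory.Comonad.adj_counit_app {D : Type*} [Category D] (K : Comonad D) (X : D) :
    K.adj.counit.app X = K.ε.app X := by
  rw [Comonad.adj_counit]

theorem stmt_7 {D : Type*} [Category D] [HasCoequalizers D] (K : Comonad D) :
    ((Monad.comparison K.adj).Full ∧ (Monad.comparison K.adj).Faithful) ↔
      ∀ X : D,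
        Nonempty (IsColimit (Cofork.ofπ (f := K.map (K.ε.app X)) (g := K.ε.app (K.obj X))
          (K.ε.app X) (by simpa using K.ε.naturality (K.ε.app X)))) := by
  rw [Monad.comparison_full_faithful_iff]
  exact forall_congr' fun X => Cofork.nonempty_isColimit_ofπ_congr
    (congrArg K.map (K.adj_counit_app X)) (K.adj_counit_app (K.obj X)) (K.adj_counit_app X) _ _
end
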